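/- arXiv:1708.02823 — 9 statements merged into one kernel-verified Lean document; each statement's English description precedes it below -/
import Mathlib

section
/- Let (ξ,η) and (ξ',η') be bipartitions of l and l' respectively, with η and η' having t₀ parts each, ξ having t₁+1 parts and ξ' having t₁ parts (padding with zeros). Assume ξ' ⪯ ξ and η ⪯ η' (where μ ⪯ μ' means μ'_{i+1} ≤ μ_i ≤ μ'_i for all i). Then for any subsets P ⊆ {1,...,t₀} and Q ⊆ {1,...,t₁}: ξ_1 + Σ_{i∈Q} ξ_{i+1} + Σ_{i∈P} η_i ≥ (l − l') + Σ_{i∈Q} ξ'_i + Σ_{i∈P} η'_i. -/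
open Finset

/-!
Since `l - l' = ξ₀ + ∑_{i < t₁} (ξ_{i+1} - ξ'_i) + ∑_{i < t₀} (η_i - η'_i)`
and interlacing makes every summand nonpositive, restricting the two sums to `Q` and `P`
can only increase them.
-/

theorem Finset.sum_sub_sum_le_sum_sub_sum_of_subset {ι α : Type*} [AddCommGroup α]
    [PartialOrder α] [IsOrderedAddMonoid α] {a b : ι → α} {s t : Finset ι} (hst : s ⊆ t)
    (hab : ∀ i ∈ t, a i ≤ b i) :
    ∑ i ∈ t, a i - ∑ i ∈ t, b i ≤ ∑ i ∈ s, a i - ∑ i ∈ s, b i := by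
  simp only [← sum_sub_distrib]
  exact sum_le_sum_of_subset_of_nonpos' hst fun i hi _ ↦ sub_nonpos.mpr (hab i hi)

theorem stmt3_general (l l' t₀ t₁ : ℕ) (ξ η ξ' η' : ℕ → ℕ)
    (hl : ∑ i ∈ range (t₁ + 1), ξ i + ∑ i ∈ range t₀, η i = l)
    (hl' : ∑ i ∈ range t₁, ξ' i + ∑ i ∈ range t₀, η' i = l')
    (hprecξ : ∀ i, ξ (i + 1) ≤ ξ' i ∧ ξ' i ≤ ξ i)
    (hprecη : ∀ i, η' (i + 1) ≤ η i ∧ η i ≤ η' i)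
    (P Q : Finset ℕ) (hP : P ⊆ range t₀) (hQ : Q ⊆ range t₁) :
    ((l : ℤ) - (l' : ℤ)) + ∑ i ∈ Q, (ξ' i : ℤ) + ∑ i ∈ P, (η' i : ℤ)
      ≤ (ξ 0 : ℤ) + ∑ i ∈ Q, (ξ (i + 1) : ℤ) + ∑ i ∈ P, (η i : ℤ) := by
  have hdiff : (l : ℤ) - l' =
      ξ 0 + (∑ i ∈ range t₁, (ξ (i + 1) : ℤ) - ∑ i ∈ range t₁, (ξ' i : ℤ))
        + (∑ i ∈ range t₀, (η i : ℤ) - ∑ i ∈ range t₀, (η' i : ℤ)) := by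
    rw [← hl, ← hl']
    push_cast
    rw [sum_range_succ']
    ring
  have hξQ := sum_sub_sum_le_sum_sub_sum_of_subset (a := fun i ↦ (ξ (i + 1) : ℤ))
    (b := fun i ↦ (ξ' i : ℤ)) hQ fun i _ ↦ by exact_mod_cast (hprecξ i).1
  have hηP := sum_sub_sum_le_sum_sub_sum_of_subset (a := fun i ↦ (η i : ℤ))
    (b := fun i ↦ (η' i : ℤ)) hP fun i _ ↦ by exact_mod_cast (hprecη i).2
  linarith

/-- technical lemma, item 1. -/
theorem stmt3 (l l' t₀ t₁ : ℕ) (ξ η ξ' η' : ℕ → ℕ)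
    (hξ_dec : ∀ i, ξ (i + 1) ≤ ξ i) (hη_dec : ∀ i, η (i + 1) ≤ η i)
    (hξ'_dec : ∀ i, ξ' (i + 1) ≤ ξ' i) (hη'_dec : ∀ i, η' (i + 1) ≤ η' i)
    (hξ_supp : ∀ i, t₁ + 1 ≤ i → ξ i = 0) (hξ'_supp : ∀ i, t₁ ≤ i → ξ' i = 0)
    (hη_supp : ∀ i, t₀ ≤ i → η i = 0) (hη'_supp : ∀ i, t₀ ≤ i → η' i = 0)
    (hl : ∑ i ∈ range (t₁ + 1), ξ i + ∑ i ∈ range t₀, η i = l)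
    (hl' : ∑ i ∈ range t₁, ξ' i + ∑ i ∈ range t₀, η' i = l')
    (hprecξ : ∀ i, ξ (i + 1) ≤ ξ' i ∧ ξ' i ≤ ξ i)
    (hprecη : ∀ i, η' (i + 1) ≤ η i ∧ η i ≤ η' i)
    (P Q : Finset ℕ) (hP : P ⊆ range t₀) (hQ : Q ⊆ range t₁) :
    ((l : ℤ) - (l' : ℤ)) + ∑ i ∈ Q, (ξ' i : ℤ) + ∑ i ∈ P, (η' i : ℤ)
      ≤ (ξ 0 : ℤ) + ∑ i ∈ Q, (ξ (i + 1) : ℤ) + ∑ i ∈ P, (η i : ℤ) :=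
  stmt3_general l l' t₀ t₁ ξ η ξ' η' hl hl' hprecξ hprecη P Q hP hQ
end

section
/- Let (ξ,η) and (ξ',η') be bipartitions of l and l' respectively, with η, η' having t₀ parts, ξ having t₁+1 parts, ξ' having t₁ parts, and suppose ξ' ⪯ ξ and η ⪯ η'. Then for any P ⊆ {1,...,t₀} and Q ⊆ {1,...,t₁+1}: Σ_{i∈Q} ξ_i + Σ_{i∈P} η_i ≤ (l − l') + η'_1 + Σ_{i∈Q} ξ'_i + Σ_{i∈P} η'_{i+1}, where ξ_{t₁+1} and η'_{t₀+1} are taken to be 0. -/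
open Finset

/-!
Since `ξ'_{t₁} = 0` and `η'_{t₀} = 0`, the right-hand side minus the left-hand side telescopes to
`∑_{i ∉ Q} (ξ_i - ξ'_i) + ∑_{i ∉ P} (η_i - η'_{i+1})`, and every term of these sums is
nonnegative by the interlacing `ξ' ⪯ ξ`, `η ⪯ η'`.
-/

theorem Finset.sum_range_succ_shift_of_eq_zero {M : Type*} [AddCommGroup M] (f : ℕ → M) {n : ℕ}
    (hn : f n = 0) : ∑ i ∈ range n, f (i + 1) = ∑ i ∈ range n, f i - f 0 := by
  have h := sum_range_succ' f n
  rw [sum_range_succ, hn, add_zero] at h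
  exact eq_sub_of_add_eq h.symm

theorem Finset.sum_sub_le_sum_sub_of_subset {ι M : Type*} [AddCommGroup M] [PartialOrder M]
    [IsOrderedAddMonoid M] {s t : Finset ι} (hst : s ⊆ t) {f g : ι → M}
    (hgf : ∀ i ∈ t, g i ≤ f i) : ∑ i ∈ s, (f i - g i) ≤ ∑ i ∈ t, (f i - g i) :=
  sum_le_sum_of_subset_of_nonneg hst fun i hi _ => sub_nonneg.2 (hgf i hi)

theorem stmt4_general (l l' t₀ t₁ : ℕ) (ξ η ξ' η' : ℕ → ℕ)
    (hξ'_supp : ∀ i, t₁ ≤ i → ξ' i = 0)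
    (hη'_supp : ∀ i, t₀ ≤ i → η' i = 0)
    (hl : ∑ i ∈ range (t₁ + 1), ξ i + ∑ i ∈ range t₀, η i = l)
    (hl' : ∑ i ∈ range t₁, ξ' i + ∑ i ∈ range t₀, η' i = l')
    (hprecξ : ∀ i, ξ (i + 1) ≤ ξ' i ∧ ξ' i ≤ ξ i)
    (hprecη : ∀ i, η' (i + 1) ≤ η i ∧ η i ≤ η' i)
    (P Q : Finset ℕ) (hP : P ⊆ range t₀) (hQ : Q ⊆ range (t₁ + 1)) :
    ∑ i ∈ Q, (ξ i : ℤ) + ∑ i ∈ P, (η i : ℤ)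
      ≤ ((l : ℤ) - (l' : ℤ)) + (η' 0 : ℤ)
        + ∑ i ∈ Q, (ξ' i : ℤ) + ∑ i ∈ P, (η' (i + 1) : ℤ) := by
  have hξ_gap : ∑ i ∈ Q, ((ξ i : ℤ) - ξ' i) ≤ ∑ i ∈ range (t₁ + 1), ((ξ i : ℤ) - ξ' i) :=
    sum_sub_le_sum_sub_of_subset hQ fun i _ => Int.ofNat_le.2 (hprecξ i).2
  have hη_gap : ∑ i ∈ P, ((η i : ℤ) - η' (i + 1)) ≤ ∑ i ∈ range t₀, ((η i : ℤ) - η' (i + 1)) :=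
    sum_sub_le_sum_sub_of_subset hP fun i _ => Int.ofNat_le.2 (hprecη i).1
  have hξ'_ext : ∑ i ∈ range (t₁ + 1), (ξ' i : ℤ) = ∑ i ∈ range t₁, (ξ' i : ℤ) := by
    rw [sum_range_succ, hξ'_supp t₁ le_rfl, Int.natCast_zero, add_zero]
  have hη'_shift : ∑ i ∈ range t₀, (η' (i + 1) : ℤ) = ∑ i ∈ range t₀, (η' i : ℤ) - η' 0 :=
    sum_range_succ_shift_of_eq_zero (fun i => (η' i : ℤ)) (by simp [hη'_supp t₀ le_rfl])
  simp only [sum_sub_distrib] at hξ_gap hη_gap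
  rw [← hl, ← hl']
  push_cast
  linarith

/-- technical lemma, item 2. Here ξ_{t₁+1} = 0 and η'_{t₀+1} = 0,
which is enforced by the support hypotheses. -/
theorem stmt4 (l l' t₀ t₁ : ℕ) (ξ η ξ' η' : ℕ → ℕ)
    (hξ_dec : ∀ i, ξ (i + 1) ≤ ξ i) (hη_dec : ∀ i, η (i + 1) ≤ η i)
    (hξ'_dec : ∀ i, ξ' (i + 1) ≤ ξ' i) (hη'_dec : ∀ i, η' (i + 1) ≤ η' i)
    (hξ_supp : ∀ i, t₁ + 1 ≤ i → ξ i = 0) (hξ'_supp : ∀ i, t₁ ≤ i → ξ' i = 0)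
    (hη_supp : ∀ i, t₀ ≤ i → η i = 0) (hη'_supp : ∀ i, t₀ ≤ i → η' i = 0)
    (hl : ∑ i ∈ range (t₁ + 1), ξ i + ∑ i ∈ range t₀, η i = l)
    (hl' : ∑ i ∈ range t₁, ξ' i + ∑ i ∈ range t₀, η' i = l')
    (hprecξ : ∀ i, ξ (i + 1) ≤ ξ' i ∧ ξ' i ≤ ξ i)
    (hprecη : ∀ i, η' (i + 1) ≤ η i ∧ η i ≤ η' i)
    (P Q : Finset ℕ) (hP : P ⊆ range t₀) (hQ : Q ⊆ range (t₁ + 1)) :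
    ∑ i ∈ Q, (ξ i : ℤ) + ∑ i ∈ P, (η i : ℤ)
      ≤ ((l : ℤ) - (l' : ℤ)) + (η' 0 : ℤ)
        + ∑ i ∈ Q, (ξ' i : ℤ) + ∑ i ∈ P, (η' (i + 1) : ℤ) :=
  stmt4_general l l' t₀ t₁ ξ η ξ' η' hξ'_supp hη'_supp hl hl' hprecξ hprecη P Q hP hQ
end

section
/- Suppose partitions η (with r+1 parts) and η' (with r parts) have a common ⪯-predecessor: there exists a partition ζ with ζ ⪯ η and ζ ⪯ η' (where ζ ⪯ η means η_{i+1} ≤ ζ_i ≤ η_i for all i). If |η| = l, |η'| = l', and l ≥ 2l', then η ≥ (l−l') ∪ η' in the dominance order, i.e. Σ_{i=1}^{k+1} η_i ≥ (l−l') + Σ_{i=1}^k η'_i for all k ≥ 0. -/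
open Finset

/-!
Interlacing gives `η (i + 1) ≤ ζ i ≤ η' i`, so the tail `η_{k+2} + η_{k+3} + ⋯` of `η` is at most
the tail `η'_{k+1} + η'_{k+2} + ⋯` of `η'`. Subtracting from the totals `l` and `l'` (and using
`l' ≤ l`, which follows from `2 l' ≤ l`) gives the dominance inequality.
-/

variable {M : Type*} [AddCommMonoid M]

theorem sum_range_eq_of_forall_le_eq_zero {f : ℕ → M} {m n : ℕ} (hmn : m ≤ n)
    (hf : ∀ i, m ≤ i → f i = 0) : ∑ i ∈ range n, f i = ∑ i ∈ range m, f i := by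
  rw [← sum_range_add_sum_Ico f hmn, sum_eq_zero fun i hi => hf i (mem_Ico.mp hi).1, add_zero]

theorem sum_Ico_succ_le_sum_Ico [PartialOrder M] [IsOrderedAddMonoid M] {f g : ℕ → M}
    (hfg : ∀ i, f (i + 1) ≤ g i) (k n : ℕ) :
    ∑ i ∈ Ico (k + 1) (n + 1), f i ≤ ∑ i ∈ Ico k n, g i := by
  rw [← sum_Ico_add']
  exact sum_le_sum fun i _ => hfg i

theorem sum_range_add_sum_range_le_of_interlace [PartialOrder M] [IsOrderedAddMonoid M]
    {f g : ℕ → M} (hfg : ∀ i, f (i + 1) ≤ g i) {k n : ℕ} (hkn : k ≤ n) :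
    ∑ i ∈ range (n + 1), f i + ∑ i ∈ range k, g i ≤
      ∑ i ∈ range (k + 1), f i + ∑ i ∈ range n, g i := by
  rw [← sum_range_add_sum_Ico f (Nat.add_le_add_right hkn 1), ← sum_range_add_sum_Ico g hkn,
    add_right_comm, add_assoc]
  grw [sum_Ico_succ_le_sum_Ico hfg k n]

theorem stmt5_general (l l' r : ℕ) (η η' ζ : ℕ → ℕ)
    (hη_supp : ∀ i, r + 1 ≤ i → η i = 0) (hη'_supp : ∀ i, r ≤ i → η' i = 0)
    (hζη : ∀ i, η (i + 1) ≤ ζ i ∧ ζ i ≤ η i)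
    (hζη' : ∀ i, η' (i + 1) ≤ ζ i ∧ ζ i ≤ η' i)
    (hl : ∑ i ∈ range (r + 1), η i = l) (hl' : ∑ i ∈ range r, η' i = l')
    (hstab : 2 * l' ≤ l) :
    ∀ k, (l - l') + ∑ i ∈ range k, η' i ≤ ∑ i ∈ range (k + 1), η i := by
  intro k
  -- Summing up to `r + k`, past both supports, avoids a case split on `k ≤ r`.
  have hl_ext : ∑ i ∈ range (r + k + 1), η i = l := by
    rw [← hl]; exact sum_range_eq_of_forall_le_eq_zero (by omega) hη_supp
  have hl'_ext : ∑ i ∈ range (r + k), η' i = l' := by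
    rw [← hl']; exact sum_range_eq_of_forall_le_eq_zero (by omega) hη'_supp
  have htail := sum_range_add_sum_range_le_of_interlace
    (fun i => (hζη i).1.trans (hζη' i).2) (Nat.le_add_left k r)
  omega

/-- if η (with r+1 parts) and η' (with r parts) have a common
⪯-predecessor ζ, |η| = l, |η'| = l', l ≥ 2l', then η ≥ (l−l') ∪ η' in
the dominance order: Σ_{i=1}^{k+1} η_i ≥ (l−l') + Σ_{i=1}^k η'_i for all k. -/
theorem stmt5 (l l' r : ℕ) (η η' ζ : ℕ → ℕ)
    (hη_dec : ∀ i, η (i + 1) ≤ η i) (hη'_dec : ∀ i, η' (i + 1) ≤ η' i)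
    (hζ_dec : ∀ i, ζ (i + 1) ≤ ζ i)
    (hη_supp : ∀ i, r + 1 ≤ i → η i = 0) (hη'_supp : ∀ i, r ≤ i → η' i = 0)
    (hζ_supp : ∀ i, r ≤ i → ζ i = 0)
    (hζη : ∀ i, η (i + 1) ≤ ζ i ∧ ζ i ≤ η i)
    (hζη' : ∀ i, η' (i + 1) ≤ ζ i ∧ ζ i ≤ η' i)
    (hl : ∑ i ∈ range (r + 1), η i = l) (hl' : ∑ i ∈ range r, η' i = l')
    (hstab : 2 * l' ≤ l) :
    ∀ k, (l - l') + ∑ i ∈ range k, η' i ≤ ∑ i ∈ range (k + 1), η i :=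
  stmt5_general l l' r η η' ζ hη_supp hη'_supp hζη hζη' hl hl' hstab
end

section
/- Suppose partitions η and η' have a common ⪯-predecessor ζ (i.e. ζ ⪯ η and ζ ⪯ η'), with |η| = l, |η'| = l', l ≥ 2l', and η' = (η'_1,...,η'_r). Then η ≤ (l − l' + η'_1 + η'_2, η'_3, ..., η'_r) in the dominance order. -/
open Finset

/-! Indexing from 0: since `η'_{i+1} ≤ ζ_i ≤ η_i`, the tail `η'_{k+1} + η'_{k+2} + ⋯` is bounded
by the tail `η_k + η_{k+1} + ⋯`. Subtracting the two tails from `l` and `l'` respectively gives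
`η_0 + ⋯ + η_{k-1} ≤ l − l' + η'_0 + ⋯ + η'_k`, which is the dominance inequality. -/

theorem sum_range_add_sum_range_le_of_interlacing {M : Type*} [AddCommMonoid M] [PartialOrder M]
    [IsOrderedAddMonoid M] {f g : ℕ → M} {n : ℕ}
    (hf : ∀ i ≥ n, f i = 0) (hg : ∀ i ≥ n, g i = 0) (hgf : ∀ i, g (i + 1) ≤ f i) (k : ℕ) :
    ∑ i ∈ range k, f i + ∑ i ∈ range n, g i ≤ ∑ i ∈ range n, f i + ∑ i ∈ range (k + 1), g i := by
  have hf_total : ∑ i ∈ range (k + n), f i = ∑ i ∈ range n, f i :=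
    eventually_constant_sum hf (by omega)
  have hg_total : ∑ i ∈ range (k + 1 + n), g i = ∑ i ∈ range n, g i :=
    eventually_constant_sum hg (by omega)
  calc ∑ i ∈ range k, f i + ∑ i ∈ range n, g i
      = ∑ i ∈ range k, f i + (∑ i ∈ range (k + 1), g i + ∑ j ∈ range n, g (k + 1 + j)) := by
        rw [← sum_range_add, hg_total]
    _ ≤ ∑ i ∈ range k, f i + (∑ i ∈ range (k + 1), g i + ∑ j ∈ range n, f (k + j)) := by
        gcongr with j
        simpa only [add_right_comm] using hgf (k + j)
    _ = ∑ i ∈ range n, f i + ∑ i ∈ range (k + 1), g i := by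
        rw [← hf_total, sum_range_add f k n]
        abel

theorem sum_range_merge_first_two {M : Type*} [AddCommMonoid M] (c : M) (a : ℕ → M) (m : ℕ) :
    ∑ i ∈ range (m + 1), (if i = 0 then c + a 0 + a 1 else a (i + 1))
      = c + ∑ i ∈ range (m + 2), a i := by
  rw [sum_range_succ', sum_range_succ' a, sum_range_succ' fun i => a (i + 1)]
  simp only [Nat.add_eq_zero_iff, one_ne_zero, and_false, if_false, if_true, zero_add]
  abel

theorem stmt6_general (l l' r : ℕ) (η η' ζ : ℕ → ℕ)
    (hη_supp : ∀ i, r + 1 ≤ i → η i = 0) (hη'_supp : ∀ i, r ≤ i → η' i = 0)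
    (hζη : ∀ i, η (i + 1) ≤ ζ i ∧ ζ i ≤ η i)
    (hζη' : ∀ i, η' (i + 1) ≤ ζ i ∧ ζ i ≤ η' i)
    (hl : ∑ i ∈ range (r + 1), η i = l) (hl' : ∑ i ∈ range r, η' i = l') :
    ∀ k, ∑ i ∈ range k, η i
      ≤ ∑ i ∈ range k, (fun i => if i = 0 then l - l' + η' 0 + η' 1 else η' (i + 1)) i := by
  rintro (_ | m)
  · simp
  have hl'_succ : ∑ i ∈ range (r + 1), η' i = l' := by
    rw [sum_range_succ, hη'_supp r le_rfl, add_zero, hl']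
  have hpartial : ∑ i ∈ range (m + 1), η i + l' ≤ l + ∑ i ∈ range (m + 2), η' i := by
    have := sum_range_add_sum_range_le_of_interlacing hη_supp
      (fun i hi => hη'_supp i (by omega)) (fun i => (hζη' i).1.trans (hζη i).2) (m + 1)
    rwa [hl, hl'_succ] at this
  rw [sum_range_merge_first_two]
  omega

/-- if η and η' have a common ⪯-predecessor ζ, with |η| = l,
|η'| = l', l ≥ 2l', then η ≤ (l − l' + η'_1 + η'_2, η'_3, ..., η'_r)
in the dominance order. -/
theorem stmt6 (l l' r : ℕ) (η η' ζ : ℕ → ℕ)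
    (hη_dec : ∀ i, η (i + 1) ≤ η i) (hη'_dec : ∀ i, η' (i + 1) ≤ η' i)
    (hζ_dec : ∀ i, ζ (i + 1) ≤ ζ i)
    (hη_supp : ∀ i, r + 1 ≤ i → η i = 0) (hη'_supp : ∀ i, r ≤ i → η' i = 0)
    (hζ_supp : ∀ i, r ≤ i → ζ i = 0)
    (hζη : ∀ i, η (i + 1) ≤ ζ i ∧ ζ i ≤ η i)
    (hζη' : ∀ i, η' (i + 1) ≤ ζ i ∧ ζ i ≤ η' i)
    (hl : ∑ i ∈ range (r + 1), η i = l) (hl' : ∑ i ∈ range r, η' i = l')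
    (hstab : 2 * l' ≤ l) :
    ∀ k, ∑ i ∈ range k, η i
      ≤ ∑ i ∈ range k, (fun i => if i = 0 then l - l' + η' 0 + η' 1 else η' (i + 1)) i :=
  stmt6_general l l' r η η' ζ hη_supp hη'_supp hζη hζη' hl hl'
end

section
/- Fix a bipartition (ξ',η') of l' and let l ≥ 2l'. Consider the set Θ(ξ',η') of bipartitions (ξ,η) of l with ξ' ⪯ ξ and η ⪯ η'. Then the bipartition ((l−l') ∪ ξ', η') belongs to Θ(ξ',η') and is its minimum for the Achar–Henderson order; and ((l−l'+η'_1+ξ'_1, ξ'_2,...,ξ'_r), (η'_2,...,η'_r)) belongs to Θ(ξ',η') and is its maximum. -/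
/-!
For `(ξ, η) ∈ Θ(ξ', η')` the interlacing conditions give `ξ_{i+1} ≤ ξ'_i`, `η_i ≤ η'_i`,
`ξ'_{i+1} ≤ ξ_{i+1}` and `η'_{i+1} ≤ η_i`. Hence every tail `∑_{i ≥ p} ξ_{i+1} + ∑_{i ≥ q} η_i`
lies between the corresponding tails of `(ξ', η')` and of `(ξ'_{·+1}, η'_{·+1})`. As the totals
are `l` and `l'`, subtracting the tails bounds every mixed prefix sum
`ξ_0 + ∑_{i < p} ξ_{i+1} + ∑_{i < q} η_i` from below by the one of `((l - l') ∪ ξ', η')` and from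
above by the one of the claimed maximum. The Achar–Henderson inequalities are such prefix sums
with `q ≤ p + 1 ≤ q + 2`. Since `l - l' ≥ l' ≥ ξ'_0`, inserting the part `l - l'` in front of `ξ'`
gives a partition.
-/

open Finset

/-- The relation μ ⪯ μ' : μ'_{i+1} ≤ μ_i ≤ μ'_i for all i. -/
def Prec (μ μ' : ℕ → ℕ) : Prop := ∀ i, μ' (i + 1) ≤ μ i ∧ μ i ≤ μ' i

/-- The Achar–Henderson order on bipartitions. -/
def AHle (ρ σ μ ν : ℕ → ℕ) : Prop :=
  ∀ k, (∑ i ∈ range k, (ρ i + σ i) ≤ ∑ i ∈ range k, (μ i + ν i)) ∧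
    (∑ i ∈ range k, (ρ i + σ i) + ρ k ≤ ∑ i ∈ range k, (μ i + ν i) + μ k)

section Sums

variable {μ f g : ℕ → ℕ} {r : ℕ}

theorem sum_range_eq_head_add_sum_range_succ (h : μ r = 0) :
    ∑ i ∈ range r, μ i = μ 0 + ∑ i ∈ range r, μ (i + 1) := by
  have := sum_range_succ μ r
  rw [sum_range_succ', h] at this
  omega

/-- The tail of `f` beyond `j` is at most that of `g`, written without subtraction. -/
theorem sum_range_add_sum_range_le_of_le (h : ∀ i, f i ≤ g i) (hg : ∀ i, r ≤ i → g i = 0)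
    (j : ℕ) :
    ∑ i ∈ range r, f i + ∑ i ∈ range j, g i ≤ ∑ i ∈ range j, f i + ∑ i ∈ range r, g i := by
  rcases le_total j r with hjr | hrj
  · have hsub := range_subset_range.mpr hjr
    rw [← sum_sdiff hsub (f := f), ← sum_sdiff hsub (f := g)]
    have := sum_le_sum fun i (_ : i ∈ range r \ range j) => h i
    omega
  · have hsub := range_subset_range.mpr hrj
    have hg0 : ∀ i ∈ range j \ range r, g i = 0 := fun i hi =>
      hg i (by simp only [mem_sdiff, mem_range] at hi; omega)
    have hf0 : ∀ i ∈ range j \ range r, f i = 0 := fun i hi =>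
      Nat.eq_zero_of_le_zero (hg0 i hi ▸ h i)
    rw [← sum_sdiff hsub (f := f), ← sum_sdiff hsub (f := g), sum_eq_zero hf0, sum_eq_zero hg0]
    omega

end Sums

/-- Both Achar–Henderson inequalities at `k` compare sums `∑_{i < p} ρ_i + ∑_{i < q} σ_i` with
`(p, q) = (k, k)` or `(k + 1, k)`; the case `p = 0` is trivial. -/
theorem AHle.of_sum_range_succ_add_le {ρ σ μ ν : ℕ → ℕ}
    (h : ∀ p q, ∑ i ∈ range (p + 1), ρ i + ∑ i ∈ range q, σ i ≤
      ∑ i ∈ range (p + 1), μ i + ∑ i ∈ range q, ν i) :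
    AHle ρ σ μ ν := by
  intro k
  simp only [sum_add_distrib]
  refine ⟨?_, by simpa only [sum_range_succ, add_right_comm] using h k k⟩
  cases k with
  | zero => simp
  | succ k => exact h k (k + 1)

/-- The sequence `(a, μ_0, μ_1, …)`: for a partition `μ` with `μ_0 ≤ a`, the partition `a ∪ μ`. -/
def insertHead (a : ℕ) (μ : ℕ → ℕ) : ℕ → ℕ := fun i => if i = 0 then a else μ (i - 1)

def replaceHead (a : ℕ) (μ : ℕ → ℕ) : ℕ → ℕ := fun i => if i = 0 then a else μ i

section Heads

variable {a : ℕ} {μ : ℕ → ℕ}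

@[simp] theorem insertHead_zero : insertHead a μ 0 = a := rfl

@[simp] theorem insertHead_succ (i : ℕ) : insertHead a μ (i + 1) = μ i := rfl

@[simp] theorem replaceHead_zero : replaceHead a μ 0 = a := rfl

@[simp] theorem replaceHead_succ (i : ℕ) : replaceHead a μ (i + 1) = μ (i + 1) := rfl

theorem sum_range_succ_insertHead (n : ℕ) :
    ∑ i ∈ range (n + 1), insertHead a μ i = a + ∑ i ∈ range n, μ i := by
  rw [sum_range_succ', add_comm]
  rfl

theorem sum_range_succ_replaceHead (n : ℕ) :
    ∑ i ∈ range (n + 1), replaceHead a μ i = a + ∑ i ∈ range n, μ (i + 1) := by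
  rw [sum_range_succ', add_comm]
  rfl

theorem insertHead_succ_le (hμ : ∀ i, μ (i + 1) ≤ μ i) (ha : μ 0 ≤ a) (i : ℕ) :
    insertHead a μ (i + 1) ≤ insertHead a μ i := by
  cases i <;> simp [*]

theorem replaceHead_succ_le (hμ : ∀ i, μ (i + 1) ≤ μ i) (ha : μ 0 ≤ a) (i : ℕ) :
    replaceHead a μ (i + 1) ≤ replaceHead a μ i := by
  cases i with
  | zero => exact (hμ 0).trans ha
  | succ i => exact hμ (i + 1)

theorem prec_insertHead (hμ : ∀ i, μ (i + 1) ≤ μ i) (ha : μ 0 ≤ a) : Prec μ (insertHead a μ) :=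
  fun i => ⟨le_rfl, by cases i <;> simp [*]⟩

theorem prec_replaceHead (hμ : ∀ i, μ (i + 1) ≤ μ i) (ha : μ 0 ≤ a) :
    Prec μ (replaceHead a μ) :=
  fun i => ⟨hμ i, by cases i <;> simp [*]⟩

end Heads

theorem prec_self {μ : ℕ → ℕ} (hμ : ∀ i, μ (i + 1) ≤ μ i) : Prec μ μ := fun i => ⟨hμ i, le_rfl⟩

theorem prec_shift {μ : ℕ → ℕ} (hμ : ∀ i, μ (i + 1) ≤ μ i) : Prec (fun i => μ (i + 1)) μ :=
  fun i => ⟨le_rfl, hμ i⟩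

/-- The set `Θ(ξ', η')`: the first component may have one part more than `r`. -/
def Theta (l r : ℕ) (ξ' η' ξ η : ℕ → ℕ) : Prop :=
  (∀ i, ξ (i + 1) ≤ ξ i) ∧ (∀ i, η (i + 1) ≤ η i) ∧
    (∀ i, r + 1 ≤ i → ξ i = 0) ∧ (∀ i, r ≤ i → η i = 0) ∧
    (∑ i ∈ range (r + 1), ξ i + ∑ i ∈ range r, η i = l) ∧
    Prec ξ' ξ ∧ Prec η η'

section Theta

variable {l l' r : ℕ} {ξ' η' ξ η : ℕ → ℕ}

theorem theta_insertHead (hξ'_dec : ∀ i, ξ' (i + 1) ≤ ξ' i) (hη'_dec : ∀ i, η' (i + 1) ≤ η' i)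
    (hξ'_supp : ∀ i, r ≤ i → ξ' i = 0) (hη'_supp : ∀ i, r ≤ i → η' i = 0)
    (hl' : ∑ i ∈ range r, ξ' i + ∑ i ∈ range r, η' i = l') (hstab : 2 * l' ≤ l) :
    Theta l r ξ' η' (insertHead (l - l') ξ') η' := by
  have hhead := sum_range_eq_head_add_sum_range_succ (hξ'_supp r le_rfl)
  have hξ'0 : ξ' 0 ≤ l - l' := by omega
  refine ⟨insertHead_succ_le hξ'_dec hξ'0, hη'_dec, fun i hi => ?_, hη'_supp, ?_,
    prec_insertHead hξ'_dec hξ'0, prec_self hη'_dec⟩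
  · obtain ⟨j, rfl⟩ := Nat.exists_eq_add_of_lt hi
    exact hξ'_supp _ (by omega)
  · rw [sum_range_succ_insertHead]
    omega

theorem theta_replaceHead (hξ'_dec : ∀ i, ξ' (i + 1) ≤ ξ' i) (hη'_dec : ∀ i, η' (i + 1) ≤ η' i)
    (hξ'_supp : ∀ i, r ≤ i → ξ' i = 0) (hη'_supp : ∀ i, r ≤ i → η' i = 0)
    (hl' : ∑ i ∈ range r, ξ' i + ∑ i ∈ range r, η' i = l') (hl : l' ≤ l) :
    Theta l r ξ' η' (replaceHead (l - l' + η' 0 + ξ' 0) ξ') (fun i => η' (i + 1)) := by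
  have hξ'head := sum_range_eq_head_add_sum_range_succ (hξ'_supp r le_rfl)
  have hη'head := sum_range_eq_head_add_sum_range_succ (hη'_supp r le_rfl)
  have hξ'0 : ξ' 0 ≤ l - l' + η' 0 + ξ' 0 := by omega
  refine ⟨replaceHead_succ_le hξ'_dec hξ'0, fun i => hη'_dec (i + 1), fun i hi => ?_,
    fun i hi => hη'_supp _ (by omega), ?_, prec_replaceHead hξ'_dec hξ'0, prec_shift hη'_dec⟩
  · obtain ⟨j, rfl⟩ := Nat.exists_eq_add_of_lt hi
    exact hξ'_supp _ (by omega)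
  · rw [sum_range_succ_replaceHead]
    dsimp only
    omega

theorem Theta.insertHead_AHle
    (hξ'_supp : ∀ i, r ≤ i → ξ' i = 0) (hη'_supp : ∀ i, r ≤ i → η' i = 0)
    (hl' : ∑ i ∈ range r, ξ' i + ∑ i ∈ range r, η' i = l') (hl : l' ≤ l)
    (h : Theta l r ξ' η' ξ η) :
    AHle (insertHead (l - l') ξ') η' ξ η := by
  obtain ⟨-, -, -, -, htot, hξ, hη⟩ := h
  refine AHle.of_sum_range_succ_add_le fun p q => ?_
  have hξtail := sum_range_add_sum_range_le_of_le (f := fun i => ξ (i + 1))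
    (fun i => (hξ i).1) hξ'_supp p
  have hηtail := sum_range_add_sum_range_le_of_le (f := η) (fun i => (hη i).2) hη'_supp q
  beta_reduce at hξtail hηtail
  rw [sum_range_succ'] at htot
  rw [sum_range_succ_insertHead, sum_range_succ']
  omega

theorem Theta.AHle_replaceHead
    (hξ'_supp : ∀ i, r ≤ i → ξ' i = 0) (hη'_supp : ∀ i, r ≤ i → η' i = 0)
    (hl' : ∑ i ∈ range r, ξ' i + ∑ i ∈ range r, η' i = l') (h : Theta l r ξ' η' ξ η) :
    AHle ξ η (replaceHead (l - l' + η' 0 + ξ' 0) ξ') (fun i => η' (i + 1)) := by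
  obtain ⟨-, -, hξ_supp, hη_supp, htot, hξ, hη⟩ := h
  refine AHle.of_sum_range_succ_add_le fun p q => ?_
  have hξtail := sum_range_add_sum_range_le_of_le (f := fun i => ξ' (i + 1))
    (g := fun i => ξ (i + 1)) (r := r) (fun i => (hξ (i + 1)).2)
    (fun i hi => hξ_supp (i + 1) (by omega)) p
  have hηtail := sum_range_add_sum_range_le_of_le (f := fun i => η' (i + 1))
    (fun i => (hη i).1) hη_supp q
  have hξ'head := sum_range_eq_head_add_sum_range_succ (hξ'_supp r le_rfl)
  have hη'head := sum_range_eq_head_add_sum_range_succ (hη'_supp r le_rfl)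
  beta_reduce at hξtail hηtail
  rw [sum_range_succ'] at htot
  rw [sum_range_succ_replaceHead, sum_range_succ']
  omega

end Theta

/-- for the set Θ(ξ',η') of bipartitions (ξ,η) of l with
ξ' ⪯ ξ and η ⪯ η', the bipartition ((l−l') ∪ ξ', η') is its minimum and
((l−l'+η'_1+ξ'_1, ξ'_2,...,ξ'_r), (η'_2,...,η'_r)) its maximum, for the
Achar–Henderson order. -/
theorem stmt13 (l l' r : ℕ) (ξ' η' : ℕ → ℕ)
    (hξ'_dec : ∀ i, ξ' (i + 1) ≤ ξ' i) (hη'_dec : ∀ i, η' (i + 1) ≤ η' i)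
    (hξ'_supp : ∀ i, r ≤ i → ξ' i = 0) (hη'_supp : ∀ i, r ≤ i → η' i = 0)
    (hl' : ∑ i ∈ range r, ξ' i + ∑ i ∈ range r, η' i = l')
    (hstab : 2 * l' ≤ l) :
    let Θ : (ℕ → ℕ) → (ℕ → ℕ) → Prop := fun ξ η =>
      (∀ i, ξ (i + 1) ≤ ξ i) ∧ (∀ i, η (i + 1) ≤ η i) ∧
      (∀ i, r + 1 ≤ i → ξ i = 0) ∧ (∀ i, r ≤ i → η i = 0) ∧
      (∑ i ∈ range (r + 1), ξ i + ∑ i ∈ range r, η i = l) ∧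
      Prec ξ' ξ ∧ Prec η η'
    let ξmin : ℕ → ℕ := fun i => if i = 0 then l - l' else ξ' (i - 1)
    let ξmax : ℕ → ℕ := fun i => if i = 0 then l - l' + η' 0 + ξ' 0 else ξ' i
    let ηmax : ℕ → ℕ := fun i => η' (i + 1)
    Θ ξmin η' ∧ (∀ ξ η, Θ ξ η → AHle ξmin η' ξ η) ∧
    Θ ξmax ηmax ∧ (∀ ξ η, Θ ξ η → AHle ξ η ξmax ηmax) :=
  ⟨theta_insertHead hξ'_dec hη'_dec hξ'_supp hη'_supp hl' hstab,
    fun _ _ h => Theta.insertHead_AHle hξ'_supp hη'_supp hl' (by omega) h,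
    theta_replaceHead hξ'_dec hη'_dec hξ'_supp hη'_supp hl' (by omega),
    fun _ _ h => Theta.AHle_replaceHead hξ'_supp hη'_supp hl' h⟩
end

section
/- Fix a bipartition (ξ',η') of l' with l ≥ 2l'. Consider the set of bipartitions (η,ξ) of l such that η' ⪯ η and ξ ⪯ ξ'. Then ((l−l') ∪ η', ξ') is the minimum and ((l−l'+ξ'_1+η'_1, η'_2,...,η'_r), (ξ'_2,...,ξ'_r)) is the maximum of this set for the Achar–Henderson order on bipartitions of l. -/
open Finset

lemma le_sum_range_of_eq_zero {f : ℕ → ℕ} {r : ℕ} (hf : ∀ i, r ≤ i → f i = 0) (j : ℕ) :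
    f j ≤ ∑ i ∈ range r, f i := by
  by_cases hj : j < r
  · exact single_le_sum (fun i _ => Nat.zero_le (f i)) (mem_range.mpr hj)
  · simp [hf j (not_lt.mp hj)]

lemma sum_range_succ_add_apply_zero {M : Type*} [AddCommMonoid M] {f : ℕ → M} {r : ℕ}
    (hf : f r = 0) : ∑ i ∈ range r, f (i + 1) + f 0 = ∑ i ∈ range r, f i := by
  rw [← sum_range_succ', sum_range_succ, hf, add_zero]

lemma sum_range_le_of_tail_le {f g : ℕ → ℕ} {N k : ℕ}
    (hsum : ∑ i ∈ range N, f i ≤ ∑ i ∈ range N, g i) (hf : ∀ i, N ≤ i → f i = 0)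
    (htail : ∀ i, k ≤ i → g i ≤ f i) :
    ∑ i ∈ range k, f i ≤ ∑ i ∈ range k, g i := by
  set M := max k N
  have hNM : range N ⊆ range M := range_subset_range.mpr (le_max_right k N)
  have hkM : k ≤ M := le_max_left k N
  have hIco : ∑ i ∈ Ico k M, g i ≤ ∑ i ∈ Ico k M, f i :=
    sum_le_sum fun i hi => htail i (mem_Ico.mp hi).1
  refine le_of_add_le_add_right (a := ∑ i ∈ Ico k M, f i) ?_
  calc ∑ i ∈ range k, f i + ∑ i ∈ Ico k M, f i
      = ∑ i ∈ range N, f i := by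
        rw [sum_range_add_sum_Ico f hkM]
        exact (sum_subset hNM fun i _ hi => hf i (by simpa using hi)).symm
    _ ≤ ∑ i ∈ range M, g i := hsum.trans (sum_le_sum_of_subset hNM)
    _ ≤ ∑ i ∈ range k, g i + ∑ i ∈ Ico k M, f i := by
        rw [← sum_range_add_sum_Ico g hkM]
        exact add_le_add_right hIco _

lemma AHle_of_sum_le {ρ σ μ ν : ℕ → ℕ} {N : ℕ}
    (hsum : ∑ i ∈ range N, (ρ i + σ i) ≤ ∑ i ∈ range N, (μ i + ν i))
    (hρσ : ∀ i, N ≤ i → ρ i + σ i = 0)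
    (hμ : ∀ i, 1 ≤ i → μ i ≤ ρ i) (hν : ∀ i, ν i ≤ σ i) : AHle ρ σ μ ν := by
  have hpartial : ∀ k, 1 ≤ k →
      ∑ i ∈ range k, (ρ i + σ i) ≤ ∑ i ∈ range k, (μ i + ν i) := fun k hk =>
    sum_range_le_of_tail_le hsum hρσ fun i hi => add_le_add (hμ i (hk.trans hi)) (hν i)
  intro k
  constructor
  · rcases Nat.eq_zero_or_pos k with rfl | hk
    · simp
    · exact hpartial k hk
  · have hsucc := hpartial (k + 1) (Nat.le_add_left 1 k)
    rw [sum_range_succ, sum_range_succ] at hsucc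
    have := hν k
    omega

namespace Prec

variable {μ μ' : ℕ → ℕ}

lemma succ_le_left (h : Prec μ μ') (i : ℕ) : μ (i + 1) ≤ μ i :=
  ((h (i + 1)).2).trans (h i).1

lemma succ_le_right (h : Prec μ μ') (i : ℕ) : μ' (i + 1) ≤ μ' i :=
  (h i).1.trans (h i).2

lemma refl (hμ : ∀ i, μ (i + 1) ≤ μ i) : Prec μ μ := fun i => ⟨hμ i, le_rfl⟩

lemma shift (hμ : ∀ i, μ (i + 1) ≤ μ i) : Prec (fun i => μ (i + 1)) μ :=
  fun i => ⟨le_rfl, hμ i⟩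

lemma cons {a : ℕ} (hμ : ∀ i, μ (i + 1) ≤ μ i) (ha : μ 0 ≤ a) :
    Prec μ (fun i => if i = 0 then a else μ (i - 1)) := by
  rintro (_ | i)
  · simpa using ha
  · simpa using hμ i

lemma replace_head {a : ℕ} (hμ : ∀ i, μ (i + 1) ≤ μ i) (ha : μ 0 ≤ a) :
    Prec μ (fun i => if i = 0 then a else μ i) := by
  rintro (_ | i)
  · simpa using ⟨hμ 0, ha⟩
  · simpa using hμ (i + 1)

end Prec

def IsInterlacingBipartition (r l : ℕ) (η' ξ' η ξ : ℕ → ℕ) : Prop :=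
  (∀ i, η (i + 1) ≤ η i) ∧ (∀ i, ξ (i + 1) ≤ ξ i) ∧
  (∀ i, r + 1 ≤ i → η i = 0) ∧ (∀ i, r ≤ i → ξ i = 0) ∧
  (∑ i ∈ range (r + 1), η i + ∑ i ∈ range r, ξ i = l) ∧
  Prec η' η ∧ Prec ξ ξ'

namespace IsInterlacingBipartition

variable {r l : ℕ} {η' ξ' η ξ : ℕ → ℕ}

lemma of_prec (hη : Prec η' η) (hξ : Prec ξ ξ') (hη_supp : ∀ i, r + 1 ≤ i → η i = 0)
    (hξ_supp : ∀ i, r ≤ i → ξ i = 0)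
    (hsum : ∑ i ∈ range (r + 1), η i + ∑ i ∈ range r, ξ i = l) :
    IsInterlacingBipartition r l η' ξ' η ξ :=
  ⟨hη.succ_le_right, hξ.succ_le_left, hη_supp, hξ_supp, hsum, hη, hξ⟩

lemma add_eq_zero (h : IsInterlacingBipartition r l η' ξ' η ξ) (i : ℕ) (hi : r + 1 ≤ i) :
    η i + ξ i = 0 := by
  rw [h.2.2.1 i hi, h.2.2.2.1 i (by omega)]

lemma sum_add_eq (h : IsInterlacingBipartition r l η' ξ' η ξ) :
    ∑ i ∈ range (r + 1), (η i + ξ i) = l := by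
  rw [sum_add_distrib, sum_range_succ ξ, h.2.2.2.1 r le_rfl, add_zero]
  exact h.2.2.2.2.1

lemma AHle {ρ σ μ ν η'' ξ'' : ℕ → ℕ} (h₁ : IsInterlacingBipartition r l η' ξ' ρ σ)
    (h₂ : IsInterlacingBipartition r l η'' ξ'' μ ν)
    (hμ : ∀ i, 1 ≤ i → μ i ≤ ρ i) (hν : ∀ i, ν i ≤ σ i) : AHle ρ σ μ ν :=
  AHle_of_sum_le (h₁.sum_add_eq.trans h₂.sum_add_eq.symm).le h₁.add_eq_zero hμ hν

end IsInterlacingBipartition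

theorem isInterlacingBipartition_min {r l l' : ℕ} {ξ' η' : ℕ → ℕ}
    (hξ'_dec : ∀ i, ξ' (i + 1) ≤ ξ' i) (hη'_dec : ∀ i, η' (i + 1) ≤ η' i)
    (hξ'_supp : ∀ i, r ≤ i → ξ' i = 0) (hη'_supp : ∀ i, r ≤ i → η' i = 0)
    (hl' : ∑ i ∈ range r, ξ' i + ∑ i ∈ range r, η' i = l') (hstab : 2 * l' ≤ l) :
    IsInterlacingBipartition r l η' ξ' (fun i => if i = 0 then l - l' else η' (i - 1)) ξ' := by
  have hhead : η' 0 ≤ l - l' := by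
    have := le_sum_range_of_eq_zero hη'_supp 0
    omega
  refine .of_prec (.cons hη'_dec hhead) (.refl hξ'_dec) (fun i hi => ?_) hξ'_supp ?_
  · simpa [show i ≠ 0 by omega] using hη'_supp (i - 1) (by omega)
  · rw [sum_range_succ']
    simp only [add_tsub_cancel_right, Nat.add_one_ne_zero, if_false, if_true]
    omega

theorem isInterlacingBipartition_max {r l l' : ℕ} {ξ' η' : ℕ → ℕ}
    (hξ'_dec : ∀ i, ξ' (i + 1) ≤ ξ' i) (hη'_dec : ∀ i, η' (i + 1) ≤ η' i)
    (hξ'_supp : ∀ i, r ≤ i → ξ' i = 0) (hη'_supp : ∀ i, r ≤ i → η' i = 0)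
    (hl' : ∑ i ∈ range r, ξ' i + ∑ i ∈ range r, η' i = l') (hstab : l' ≤ l) :
    IsInterlacingBipartition r l η' ξ' (fun i => if i = 0 then l - l' + ξ' 0 + η' 0 else η' i)
      (fun i => ξ' (i + 1)) := by
  refine .of_prec (.replace_head hη'_dec (Nat.le_add_left _ _)) (.shift hξ'_dec)
    (fun i hi => ?_) (fun i hi => hξ'_supp (i + 1) (by omega)) ?_
  · simpa [show i ≠ 0 by omega] using hη'_supp i (by omega)
  · have hη'_shift := sum_range_succ_add_apply_zero (hη'_supp r le_rfl)
    have hξ'_shift := sum_range_succ_add_apply_zero (hξ'_supp r le_rfl)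
    rw [sum_range_succ']
    simp only [Nat.add_one_ne_zero, if_false, if_true]
    omega

/-- for the set of bipartitions (η,ξ) of l with η' ⪯ η and
ξ ⪯ ξ', the bipartition ((l−l') ∪ η', ξ') is its minimum and
((l−l'+ξ'_1+η'_1, η'_2,...,η'_r), (ξ'_2,...,ξ'_r)) its maximum, for the
Achar–Henderson order. -/
theorem stmt14 (l l' r : ℕ) (ξ' η' : ℕ → ℕ)
    (hξ'_dec : ∀ i, ξ' (i + 1) ≤ ξ' i) (hη'_dec : ∀ i, η' (i + 1) ≤ η' i)
    (hξ'_supp : ∀ i, r ≤ i → ξ' i = 0) (hη'_supp : ∀ i, r ≤ i → η' i = 0)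
    (hl' : ∑ i ∈ range r, ξ' i + ∑ i ∈ range r, η' i = l')
    (hstab : 2 * l' ≤ l) :
    let Θ : (ℕ → ℕ) → (ℕ → ℕ) → Prop := fun η ξ =>
      (∀ i, η (i + 1) ≤ η i) ∧ (∀ i, ξ (i + 1) ≤ ξ i) ∧
      (∀ i, r + 1 ≤ i → η i = 0) ∧ (∀ i, r ≤ i → ξ i = 0) ∧
      (∑ i ∈ range (r + 1), η i + ∑ i ∈ range r, ξ i = l) ∧
      Prec η' η ∧ Prec ξ ξ'
    let ηmin : ℕ → ℕ := fun i => if i = 0 then l - l' else η' (i - 1)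
    let ηmax : ℕ → ℕ := fun i => if i = 0 then l - l' + ξ' 0 + η' 0 else η' i
    let ξmax : ℕ → ℕ := fun i => ξ' (i + 1)
    Θ ηmin ξ' ∧ (∀ η ξ, Θ η ξ → AHle ηmin ξ' η ξ) ∧
    Θ ηmax ξmax ∧ (∀ η ξ, Θ η ξ → AHle η ξ ηmax ξmax) := by
  intro Θ ηmin ηmax ξmax
  have hmin : IsInterlacingBipartition r l η' ξ' ηmin ξ' :=
    isInterlacingBipartition_min hξ'_dec hη'_dec hξ'_supp hη'_supp hl' hstab
  have hmax : IsInterlacingBipartition r l η' ξ' ηmax ξmax :=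
    isInterlacingBipartition_max hξ'_dec hη'_dec hξ'_supp hη'_supp hl' (by omega)
  refine ⟨hmin, fun η ξ (h : IsInterlacingBipartition r l η' ξ' η ξ) => ?_, hmax,
    fun η ξ (h : IsInterlacingBipartition r l η' ξ' η ξ) => ?_⟩
  · obtain ⟨hη, hξ⟩ := h.2.2.2.2.2
    refine hmin.AHle h (fun i hi => ?_) fun i => (hξ i).2
    obtain ⟨j, rfl⟩ := Nat.exists_eq_add_of_le' hi
    simpa [ηmin] using (hη j).1
  · obtain ⟨hη, hξ⟩ := h.2.2.2.2.2
    refine h.AHle hmax (fun i hi => ?_) fun i => (hξ i).1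
    simpa [ηmax, show i ≠ 0 by omega] using (hη i).2
end

section
/- Fix k and an odd t. Let μ and μ' be partitions with 2-core τ_k, with 2-quotients (computed from t-sets of β-numbers) (η, ξ) and (η, ξ') respectively (same first quotient component). If ξ ≤ ξ' in the dominance order (and |ξ| = |ξ'|), then μ ≤ μ' in the dominance order. -/
/-!
For a finite set `S ⊆ ℕ` consider the excess function `m ↦ ∑_{x ∈ S} (x - m)⁺`. For decreasing
sequences of length `n`, one sequence is weakly dominated by another exactly when its excess
function is pointwise smaller. The excess function is additive over disjoint unions, and the
β-set of `μ` is the disjoint union of its even part, which `μ` and `μ'` share, and its odd part,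
which is the doubled β-set of `ξ` (resp. `ξ'`) shifted by one. Dominance `ξ ≤ ξ'` therefore
bounds the excess of the odd parts, hence of the whole β-sets, and this is dominance of the
β-numbers of `μ` by those of `μ'`, i.e. `μ ≤ μ'`.
-/

open Finset

/-- The t-set of β-numbers. -/
def betaSet (t : ℕ) (μ : ℕ → ℕ) : Finset ℕ :=
  (Finset.range t).image (fun i => μ i + (t - 1 - i))

section WeakDominance

variable {a a' : ℕ → ℕ} {n k m : ℕ}

theorem sum_range_le_mul_add_sum_tsub (a : ℕ → ℕ) (m : ℕ) (hk : k ≤ n) :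
    ∑ i ∈ range k, a i ≤ k * m + ∑ i ∈ range n, (a i - m) :=
  calc ∑ i ∈ range k, a i ≤ ∑ i ∈ range k, (m + (a i - m)) :=
        sum_le_sum fun _ _ => le_add_tsub
    _ = k * m + ∑ i ∈ range k, (a i - m) := by
        rw [sum_add_distrib, sum_const, card_range, smul_eq_mul]
    _ ≤ k * m + ∑ i ∈ range n, (a i - m) :=
        Nat.add_le_add_left (sum_le_sum_of_subset (range_subset_range.2 hk)) _

theorem sum_range_eq_mul_add_sum_tsub (hk : k ≤ n) (hge : ∀ i < k, m ≤ a i)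
    (hle : ∀ i, k ≤ i → i < n → a i ≤ m) :
    ∑ i ∈ range k, a i = k * m + ∑ i ∈ range n, (a i - m) :=
  calc ∑ i ∈ range k, a i = ∑ i ∈ range k, (m + (a i - m)) :=
        sum_congr rfl fun i hi => (add_tsub_cancel_of_le (hge i (mem_range.1 hi))).symm
    _ = k * m + ∑ i ∈ range k, (a i - m) := by
        rw [sum_add_distrib, sum_const, card_range, smul_eq_mul]
    _ = k * m + ∑ i ∈ range n, (a i - m) := by
        rw [← sum_range_add_sum_Ico _ hk, sum_eq_zero fun i hi =>
          tsub_eq_zero_of_le (hle i (mem_Ico.1 hi).1 (mem_Ico.1 hi).2), add_zero]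

theorem forall_sum_range_le_iff_forall_sum_tsub_le (ha : Antitone a) (ha' : Antitone a') :
    (∀ k ≤ n, ∑ i ∈ range k, a i ≤ ∑ i ∈ range k, a' i) ↔
      ∀ m, ∑ i ∈ range n, (a i - m) ≤ ∑ i ∈ range n, (a' i - m) := by
  classical
  constructor
  · intro hdom m
    -- cut at the first index where `a` drops to `m` or below
    have hex : ∃ k, k = n ∨ a k ≤ m := ⟨n, .inl rfl⟩
    have hkn : Nat.find hex ≤ n := Nat.find_min' hex (.inl rfl)
    have hge : ∀ i < Nat.find hex, m ≤ a i := fun i hi => by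
      have := Nat.find_min hex hi
      omega
    have hle : ∀ i, Nat.find hex ≤ i → i < n → a i ≤ m := fun i hki hin => by
      rcases Nat.find_spec hex with h | h
      · omega
      · exact (ha hki).trans h
    have := sum_range_eq_mul_add_sum_tsub hkn hge hle
    have := sum_range_le_mul_add_sum_tsub a' m hkn
    have := hdom _ hkn
    omega
  · intro hexcess k hk
    calc ∑ i ∈ range k, a i ≤ k * a' k + ∑ i ∈ range n, (a i - a' k) :=
          sum_range_le_mul_add_sum_tsub a _ hk
      _ ≤ k * a' k + ∑ i ∈ range n, (a' i - a' k) := Nat.add_le_add_left (hexcess _) _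
      _ = ∑ i ∈ range k, a' i :=
          (sum_range_eq_mul_add_sum_tsub hk (fun _ hi => ha' hi.le) fun _ hki _ => ha' hki).symm

theorem sum_range_eq_sum_range_min (h : ∀ i, n ≤ i → a i = 0) (k : ℕ) :
    ∑ i ∈ range k, a i = ∑ i ∈ range (min k n), a i :=
  (sum_subset (range_subset_range.2 (min_le_left k n)) fun i hik hin =>
    h i (by simp only [mem_range] at hik hin; omega)).symm

end WeakDominance

section BetaNumbers

variable {a a' : ℕ → ℕ} {n : ℕ}

theorem antitone_betaNumbers (ha : Antitone a) : Antitone fun i => a i + (n - 1 - i) :=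
  ha.add fun _ _ h => Nat.sub_le_sub_left h _

theorem strictAntiOn_betaNumbers (ha : Antitone a) :
    StrictAntiOn (fun i => a i + (n - 1 - i)) (Set.Iio n) := fun i _ j hj hij => by
  have := ha hij.le
  simp only [Set.mem_Iio] at hj ⊢
  omega

theorem injOn_betaNumbers (ha : Antitone a) :
    Set.InjOn (fun i => a i + (n - 1 - i)) (range n) := by
  rw [coe_range]
  exact (strictAntiOn_betaNumbers ha).injOn

theorem sum_betaSet {M : Type*} [AddCommMonoid M] (ha : Antitone a) (f : ℕ → M) :
    ∑ x ∈ betaSet n a, f x = ∑ i ∈ range n, f (a i + (n - 1 - i)) :=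
  sum_image (injOn_betaNumbers ha)

theorem disjoint_image_even_image_odd (s s' : Finset ℕ) (f g : ℕ → ℕ) :
    Disjoint (s.image fun i => 2 * f i) (s'.image fun i => 2 * g i + 1) := by
  rw [disjoint_left]
  simp only [mem_image, not_exists, not_and]
  rintro _ ⟨i, -, rfl⟩ j - h
  omega

theorem sum_tsub_image_oddBeta_le (ha : Antitone a) (ha' : Antitone a')
    (hdom : ∀ k ≤ n, ∑ i ∈ range k, a i ≤ ∑ i ∈ range k, a' i) (m : ℕ) :
    ∑ x ∈ (range n).image (fun i => 2 * (a i + (n - 1 - i)) + 1), (x - m) ≤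
      ∑ x ∈ (range n).image (fun i => 2 * (a' i + (n - 1 - i)) + 1), (x - m) := by
  have hodd : Function.Injective fun x : ℕ => 2 * x + 1 := fun _ _ h => by simpa using h
  have hanti : ∀ {b : ℕ → ℕ}, Antitone b → Antitone fun i => 2 * (b i + (n - 1 - i)) + 1 :=
    fun hb _ _ h => by
      have := antitone_betaNumbers (n := n) hb h
      simp only at this ⊢
      omega
  have hdom_odd : ∀ k ≤ n, ∑ i ∈ range k, (2 * (a i + (n - 1 - i)) + 1) ≤
      ∑ i ∈ range k, (2 * (a' i + (n - 1 - i)) + 1) := fun k hk => by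
    have := hdom k hk
    simp only [sum_add_distrib, ← mul_sum]
    omega
  rw [sum_image, sum_image]
  · exact (forall_sum_range_le_iff_forall_sum_tsub_le (hanti ha) (hanti ha')).1 hdom_odd m
  · exact hodd.comp_injOn (injOn_betaNumbers ha')
  · exact hodd.comp_injOn (injOn_betaNumbers ha)

end BetaNumbers

theorem stmt15_general (t t₀ t₁ : ℕ)
    (η ξ ξ' μ μ' : ℕ → ℕ)
    (hξ_dec : ∀ i, ξ (i + 1) ≤ ξ i) (hξ'_dec : ∀ i, ξ' (i + 1) ≤ ξ' i)
    (hμ_dec : ∀ i, μ (i + 1) ≤ μ i) (hμ'_dec : ∀ i, μ' (i + 1) ≤ μ' i)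
    (hμ_supp : ∀ i, t ≤ i → μ i = 0) (hμ'_supp : ∀ i, t ≤ i → μ' i = 0)
    (hβ : betaSet t μ =
      (Finset.range t₀).image (fun i => 2 * (η i + (t₀ - 1 - i))) ∪
      (Finset.range t₁).image (fun i => 2 * (ξ i + (t₁ - 1 - i)) + 1))
    (hβ' : betaSet t μ' =
      (Finset.range t₀).image (fun i => 2 * (η i + (t₀ - 1 - i))) ∪
      (Finset.range t₁).image (fun i => 2 * (ξ' i + (t₁ - 1 - i)) + 1))
    (hdom : ∀ k, ∑ i ∈ range k, ξ i ≤ ∑ i ∈ range k, ξ' i) :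
    ∀ k, ∑ i ∈ range k, μ i ≤ ∑ i ∈ range k, μ' i := by
  have hμ := antitone_nat_of_succ_le hμ_dec
  have hμ' := antitone_nat_of_succ_le hμ'_dec
  have hexcess : ∀ m, ∑ i ∈ range t, (μ i + (t - 1 - i) - m) ≤
      ∑ i ∈ range t, (μ' i + (t - 1 - i) - m) := fun m => by
    rw [← sum_betaSet hμ (· - m), ← sum_betaSet hμ' (· - m), hβ, hβ',
      sum_union (disjoint_image_even_image_odd _ _ _ _),
      sum_union (disjoint_image_even_image_odd _ _ _ _)]
    exact Nat.add_le_add_left (sum_tsub_image_oddBeta_le (antitone_nat_of_succ_le hξ_dec)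
      (antitone_nat_of_succ_le hξ'_dec) (fun k _ => hdom k) m) _
  have hβdom := (forall_sum_range_le_iff_forall_sum_tsub_le
    (antitone_betaNumbers hμ) (antitone_betaNumbers hμ')).2 hexcess
  intro k
  have := hβdom (min k t) (min_le_right k t)
  simp only [sum_add_distrib] at this
  rw [sum_range_eq_sum_range_min hμ_supp, sum_range_eq_sum_range_min hμ'_supp]
  omega

/-- if μ and μ' are partitions with 2-core τ_k whose 2-quotients
(computed from t-sets of β-numbers, t odd) are (η,ξ) and (η,ξ') with the same
first component, and ξ ≤ ξ' in the dominance order with |ξ| = |ξ'|, then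
μ ≤ μ' in the dominance order. The β-sets of μ and μ' are expressed from
the quotients as {2(η_i + t₀ − i)} ∪ {2(ξ_i + t₁ − i) + 1}. -/
theorem stmt15 (t t₀ t₁ : ℕ) (ht : Odd t) (htt : t₀ + t₁ = t)
    (η ξ ξ' μ μ' : ℕ → ℕ)
    (hη_dec : ∀ i, η (i + 1) ≤ η i)
    (hξ_dec : ∀ i, ξ (i + 1) ≤ ξ i) (hξ'_dec : ∀ i, ξ' (i + 1) ≤ ξ' i)
    (hμ_dec : ∀ i, μ (i + 1) ≤ μ i) (hμ'_dec : ∀ i, μ' (i + 1) ≤ μ' i)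
    (hη_supp : ∀ i, t₀ ≤ i → η i = 0)
    (hξ_supp : ∀ i, t₁ ≤ i → ξ i = 0) (hξ'_supp : ∀ i, t₁ ≤ i → ξ' i = 0)
    (hμ_supp : ∀ i, t ≤ i → μ i = 0) (hμ'_supp : ∀ i, t ≤ i → μ' i = 0)
    (hβ : betaSet t μ =
      (Finset.range t₀).image (fun i => 2 * (η i + (t₀ - 1 - i))) ∪
      (Finset.range t₁).image (fun i => 2 * (ξ i + (t₁ - 1 - i)) + 1))
    (hβ' : betaSet t μ' =
      (Finset.range t₀).image (fun i => 2 * (η i + (t₀ - 1 - i))) ∪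
      (Finset.range t₁).image (fun i => 2 * (ξ' i + (t₁ - 1 - i)) + 1))
    (hsize : ∑ i ∈ range t₁, ξ i = ∑ i ∈ range t₁, ξ' i)
    (hdom : ∀ k, ∑ i ∈ range k, ξ i ≤ ∑ i ∈ range k, ξ' i) :
    ∀ k, ∑ i ∈ range k, μ i ≤ ∑ i ∈ range k, μ' i :=
  stmt15_general t t₀ t₁ η ξ ξ' μ μ' hξ_dec hξ'_dec hμ_dec hμ'_dec hμ_supp hμ'_supp hβ hβ' hdom
end

section
/- Let λ be a symplectic partition of 2n with 2k parts (padding with a zero if needed), and set λ*_j = λ_{2k−j+1} + j − 1 for j = 1,...,2k. Then λ* has exactly k odd entries and k even entries. -/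
open Finset

/-!
Put `i = 2k - 1 - j`; then `λ*_j` is odd exactly when `λ_i ≡ i (mod 2)`. As `λ` is antitone,
the indices carrying a value `m` form an interval, and for odd `m` its length is even, so it
contains as many odd as even indices. Hence odd parts sit at odd and at even indices equally
often, and `#{i < 2k | λ_i ≡ i} = #{i < 2k | λ_i odd, i even} + #{i < 2k | λ_i even, i even}`
is the number `k` of even indices below `2k`.
-/

theorem Finset.eq_range_card_of_isLowerSet {s : Finset ℕ} (hs : IsLowerSet (s : Set ℕ)) :
    s = range #s := by
  refine eq_of_subset_of_card_le (fun x hx => ?_) (card_range _).le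
  have : range (x + 1) ⊆ s := fun y hy => hs (Nat.lt_succ_iff.mp (mem_range.mp hy)) hx
  simpa using card_le_card this

theorem card_filter_odd_Ico_eq_card_filter_even {a b : ℕ} (h : Even (b - a)) :
    #{i ∈ Ico a b | Odd i} = #{i ∈ Ico a b | Even i} := by
  obtain ⟨t, ht⟩ := h
  -- `a + b` is odd, so reflecting the interval by `i ↦ a + b - 1 - i` swaps parities
  refine card_nbij' (fun i => a + b - 1 - i) (fun i => a + b - 1 - i) ?_ ?_ ?_ ?_ <;>
  · intro i hi
    simp only [coe_filter, mem_Ico, Set.mem_ofPred_eq, Nat.odd_iff, Nat.even_iff] at hi ⊢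
    omega

theorem card_filter_even_range_two_mul (k : ℕ) : #{i ∈ range (2 * k) | Even i} = k := by
  induction k with
  | zero => rfl
  | succ k ih =>
    rw [Nat.mul_succ, range_add_one, range_add_one, filter_insert, filter_insert]
    simp [ih, parity_simps]

section Antitone

variable {f : ℕ → ℕ} {N : ℕ}

theorem filter_le_eq_range_card_of_antitone (hf : Antitone f) (m : ℕ) :
    {i ∈ range N | m ≤ f i} = range #{i ∈ range N | m ≤ f i} :=
  eq_range_card_of_isLowerSet fun _ _ hji hi => by
    simp only [coe_filter, mem_range, Set.mem_ofPred_eq] at hi ⊢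
    exact ⟨hji.trans_lt hi.1, hi.2.trans (hf hji)⟩

theorem filter_eq_eq_Ico_of_antitone (hf : Antitone f) (m : ℕ) :
    {i ∈ range N | f i = m} =
      Ico #{i ∈ range N | m + 1 ≤ f i} #{i ∈ range N | m ≤ f i} := by
  ext i
  have hm := Finset.ext_iff.mp (filter_le_eq_range_card_of_antitone (N := N) hf m) i
  have hm₁ := Finset.ext_iff.mp (filter_le_eq_range_card_of_antitone (N := N) hf (m + 1)) i
  simp only [mem_filter, mem_range] at hm hm₁
  simp only [mem_filter, mem_range, mem_Ico]
  omega

theorem card_filter_eq_and_odd_eq_card_filter_eq_and_even (hf : Antitone f) {m : ℕ}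
    (hm : Even #{i ∈ range N | f i = m}) :
    #{i ∈ range N | f i = m ∧ Odd i} = #{i ∈ range N | f i = m ∧ Even i} := by
  rw [← filter_filter, ← filter_filter, filter_eq_eq_Ico_of_antitone hf m] at *
  rw [Nat.card_Ico] at hm
  exact card_filter_odd_Ico_eq_card_filter_even hm

theorem card_filter_odd_and_odd_eq_card_filter_odd_and_even (hf : Antitone f)
    (hsymp : ∀ m, Odd m → Even #{i ∈ range N | f i = m}) :
    #{i ∈ range N | Odd (f i) ∧ Odd i} = #{i ∈ range N | Odd (f i) ∧ Even i} := by
  have hmaps : ∀ p : ℕ → Prop, [DecidablePred p] →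
      Set.MapsTo f ({i ∈ range N | Odd (f i) ∧ p i} : Finset ℕ)
        ({m ∈ (range N).image f | Odd m} : Finset ℕ) := by
    intro p _ i hi
    simp only [coe_filter, mem_range, Set.mem_ofPred_eq] at hi ⊢
    exact ⟨mem_image_of_mem f (mem_range.mpr hi.1), hi.2.1⟩
  rw [card_eq_sum_card_fiberwise (hmaps Odd), card_eq_sum_card_fiberwise (hmaps Even)]
  refine sum_congr rfl fun m hm => ?_
  have hodd : Odd m := (mem_filter.mp hm).2
  have hfiber (p : ℕ → Prop) [DecidablePred p] :
      {i ∈ {i ∈ range N | Odd (f i) ∧ p i} | f i = m} =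
        {i ∈ range N | f i = m ∧ p i} := by
    rw [filter_filter]
    exact filter_congr fun i _ =>
      ⟨fun h => ⟨h.2, h.1.2⟩, fun h => ⟨⟨h.1 ▸ hodd, h.2⟩, h.1⟩⟩
  rw [hfiber, hfiber]
  exact card_filter_eq_and_odd_eq_card_filter_eq_and_even hf (hsymp m hodd)

theorem card_filter_mod_two_eq_eq_card_filter_even (hf : Antitone f)
    (hsymp : ∀ m, Odd m → Even #{i ∈ range N | f i = m}) :
    #{i ∈ range N | f i % 2 = i % 2} = #{i ∈ range N | Even i} := by
  have hcount : #{i ∈ range N | f i % 2 = i % 2} + #{i ∈ range N | Odd (f i) ∧ Even i}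
      = #{i ∈ range N | Even i} + #{i ∈ range N | Odd (f i) ∧ Odd i} := by
    simp only [card_filter, ← sum_add_distrib]
    refine sum_congr rfl fun i _ => ?_
    simp only [Nat.odd_iff, Nat.even_iff]
    split_ifs <;> omega
  have := card_filter_odd_and_odd_eq_card_filter_odd_and_even hf hsymp
  omega

end Antitone

theorem card_filter_reflect_add_mod_two_eq_one (k : ℕ) (f : ℕ → ℕ) :
    #{j ∈ range (2 * k) | (f (2 * k - 1 - j) + j) % 2 = 1} =
      #{i ∈ range (2 * k) | f i % 2 = i % 2} := by
  refine card_nbij' (fun j => 2 * k - 1 - j) (fun i => 2 * k - 1 - i) ?_ ?_ ?_ ?_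
  all_goals intro i hi
  all_goals simp only [coe_filter, mem_range, Set.mem_ofPred_eq] at hi ⊢
  · omega
  · rw [show 2 * k - 1 - (2 * k - 1 - i) = i by omega]
    omega
  · omega
  · omega

theorem stmt17_general (k : ℕ) (lam : ℕ → ℕ)
    (hdec : ∀ i, lam (i + 1) ≤ lam i)
    (hsymp : ∀ m, Odd m →
      Even (((range (2 * k)).filter (fun j => lam j = m)).card)) :
    ((range (2 * k)).filter (fun j => (lam (2 * k - 1 - j) + j) % 2 = 1)).card = k ∧
    ((range (2 * k)).filter (fun j => (lam (2 * k - 1 - j) + j) % 2 = 0)).card = k := by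
  have hodd : #{j ∈ range (2 * k) | (lam (2 * k - 1 - j) + j) % 2 = 1} = k := by
    rw [card_filter_reflect_add_mod_two_eq_one, card_filter_mod_two_eq_eq_card_filter_even
      (antitone_nat_of_succ_le hdec) hsymp, card_filter_even_range_two_mul]
  refine ⟨hodd, ?_⟩
  have hsplit := card_filter_add_card_filter_not (s := range (2 * k))
    (fun j => (lam (2 * k - 1 - j) + j) % 2 = 1)
  simp only [Nat.mod_two_ne_one, card_range] at hsplit
  omega

/-- let λ be a symplectic partition of 2n with 2k parts and set
λ*_j = λ_{2k−j+1} + j − 1 for j = 1,...,2k. Then λ* has exactly k odd and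
k even entries. (0-indexed: λ* j = λ (2k−1−j) + j for j = 0,...,2k−1.) -/
theorem stmt17 (n k : ℕ) (lam : ℕ → ℕ)
    (hdec : ∀ i, lam (i + 1) ≤ lam i)
    (hsupp : ∀ i, 2 * k ≤ i → lam i = 0)
    (hsum : ∑ i ∈ range (2 * k), lam i = 2 * n)
    (hsymp : ∀ m, Odd m →
      Even (((range (2 * k)).filter (fun j => lam j = m)).card)) :
    ((range (2 * k)).filter (fun j => (lam (2 * k - 1 - j) + j) % 2 = 1)).card = k ∧
    ((range (2 * k)).filter (fun j => (lam (2 * k - 1 - j) + j) % 2 = 0)).card = k :=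
  stmt17_general k lam hdec hsymp
end

section
/- Let ζ and ζ' be partitions of the same integer with k parts, and ξ' a partition with k+1 parts, such that both u-symbols (top row ξ'_{k+1}, ξ'_k+2, ..., ξ'_1+2k; bottom rows from ζ resp. ζ') give multisets γ and γ' of 2k+1 entries. If ζ ≤ ζ' in the dominance order, then the decreasing rearrangements satisfy γ_1 + ⋯ + γ_r ≤ γ'_1 + ⋯ + γ'_r for every r = 1,...,2k+1. -/
/-!
Both u-symbols consist of the common top row `A` together with the bottom row `B ζ` resp. `B ζ'`.
Since `ζ` is nonincreasing, the bottom entries, indexed by the part `ζ_j` they come from, are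
`ζ_j + 2(k-1-j) + 1`, already in decreasing order in `j`; so the sum of the `r` largest of them is
`∑_{j < min r k} ζ_j` plus a term independent of `ζ`, and dominance `ζ ≤ ζ'` gives
`topSum (B ζ) ≤ topSum (B ζ')`. This majorization survives adding `A` to both sides, because
`topSum γ r` is the largest sum of a sub-multiset of `γ` with at most `r` elements: split such a
sub-multiset of `A + B ζ` into its parts in `A` and in `B ζ`, and trade the latter for the
`topSum` of `B ζ'` of the same size.
-/

open Finset

/-- The multiset of entries of the u-symbol of (ξ,ζ), with ξ of k+1 parts and
ζ of k parts: top entries ξ_{k+1−i} + 2i (i = 0,...,k), bottom entries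
ζ_{k−i} + 2i + 1 (i = 0,...,k−1). -/
def usymbolEntries (k : ℕ) (ξ ζ : ℕ → ℕ) : Multiset ℕ :=
  (Multiset.range (k + 1)).map (fun i => ξ (k - i) + 2 * i) +
  (Multiset.range k).map (fun i => ζ (k - 1 - i) + 2 * i + 1)

/-- The sum of the r largest elements of a multiset of naturals, i.e. the r-th
partial sum of its decreasing rearrangement. -/
def topSum (γ : Multiset ℕ) (r : ℕ) : ℕ :=
  ((γ.sort (· ≤ ·)).reverse.take r).sum

theorem List.sum_take_add_one_le_add_sum_take {l : List ℕ} {a : ℕ} (h : ∀ x ∈ l, x ≤ a)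
    (s : ℕ) : (l.take (s + 1)).sum ≤ a + (l.take s).sum := by
  rw [List.take_add_one, List.sum_append, add_comm]
  gcongr
  cases hs : l[s]? with
  | none => simp
  | some x => simpa using h x (List.mem_of_getElem? hs)

theorem List.Sublist.sum_take_le_sum_take {l₁ l₂ : List ℕ} (h : List.Sublist l₁ l₂)
    (hl₂ : l₂.Pairwise (· ≥ ·)) (r : ℕ) : (l₁.take r).sum ≤ (l₂.take r).sum := by
  induction h generalizing r with
  | slnil => simp
  | @cons l₁ l₂ a _ ih =>
    refine (ih hl₂.of_cons r).trans ?_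
    cases r with
    | zero => simp
    | succ s =>
      rw [List.take_succ_cons, List.sum_cons]
      exact List.sum_take_add_one_le_add_sum_take (fun x hx => List.rel_of_pairwise_cons hl₂ hx) s
  | cons_cons a _ ih =>
    cases r with
    | zero => simp
    | succ s => simpa using ih hl₂.of_cons s

theorem Multiset.map_range_reflect {α : Type*} (f : ℕ → α) (n : ℕ) :
    (Multiset.range n).map (fun i => f (n - 1 - i)) = (Multiset.range n).map f := by
  rw [← Function.comp_def f, ← Multiset.map_map f (fun i => n - 1 - i)]
  congr 1
  have h : (List.range n).reverse = (List.range n).map (fun i => n - 1 - i) := by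
    simpa [← List.range_eq_range'] using List.reverse_range' (s := 0) (n := n)
  rw [← Multiset.coe_range, Multiset.map_coe, ← h, Multiset.coe_reverse]


lemma pairwise_ge_reverse_sort (γ : Multiset ℕ) :
    ((γ.sort (· ≤ ·)).reverse).Pairwise (· ≥ ·) :=
  List.pairwise_reverse.2 (γ.pairwise_sort _)

lemma coe_reverse_sort (γ : Multiset ℕ) :
    (((γ.sort (· ≤ ·)).reverse : List ℕ) : Multiset ℕ) = γ := by
  rw [Multiset.coe_reverse, Multiset.sort_eq]

lemma topSum_coe_of_pairwise_ge {l : List ℕ} (hl : l.Pairwise (· ≥ ·)) (r : ℕ) :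
    topSum l r = (l.take r).sum := by
  have hsort : ((l : Multiset ℕ).sort (· ≤ ·)).reverse = l :=
    List.Perm.eq_of_pairwise' (pairwise_ge_reverse_sort _) hl
      (Multiset.coe_eq_coe.1 (coe_reverse_sort _))
  rw [topSum, hsort]

lemma sum_le_topSum {S γ : Multiset ℕ} (h : S ≤ γ) {r : ℕ} (hr : Multiset.card S ≤ r) :
    S.sum ≤ topSum γ r := by
  have hsub : List.Sublist (S.sort (· ≤ ·)).reverse (γ.sort (· ≤ ·)).reverse :=
    List.sublist_of_subperm_of_pairwise
      (by rwa [← Multiset.coe_le, coe_reverse_sort, coe_reverse_sort])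
      (pairwise_ge_reverse_sort S) (pairwise_ge_reverse_sort γ)
  calc S.sum = ((S.sort (· ≤ ·)).reverse.take r).sum := by
        rw [List.take_of_length_le (by simpa using hr), ← Multiset.sum_coe, coe_reverse_sort]
    _ ≤ topSum γ r := hsub.sum_take_le_sum_take (pairwise_ge_reverse_sort γ) r

lemma exists_le_card_le_sum_eq_topSum (γ : Multiset ℕ) (r : ℕ) :
    ∃ T ≤ γ, Multiset.card T ≤ r ∧ T.sum = topSum γ r :=
  ⟨((γ.sort (· ≤ ·)).reverse.take r : List ℕ),
    (Multiset.coe_le.2 (List.take_sublist _ _).subperm).trans_eq (coe_reverse_sort γ),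
    by simp, by simp [topSum]⟩

lemma topSum_add_le_topSum_add (A : Multiset ℕ) {B B' : Multiset ℕ}
    (hB : ∀ s, topSum B s ≤ topSum B' s) (r : ℕ) :
    topSum (A + B) r ≤ topSum (A + B') r := by
  obtain ⟨S, hS, hScard, hSsum⟩ := exists_le_card_le_sum_eq_topSum (A + B) r
  have hsplit : S ∩ A + (S - A) = S := by rw [add_comm, Multiset.sub_add_inter]
  have hSB : S - A ≤ B := Multiset.sub_le_iff_le_add.2 (hS.trans_eq (add_comm A B))
  obtain ⟨T, hT, hTcard, hTsum⟩ :=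
    exists_le_card_le_sum_eq_topSum B' (Multiset.card (S - A))
  have hcard : Multiset.card (S ∩ A + T) ≤ r := by
    rw [← hsplit, Multiset.card_add] at hScard
    rw [Multiset.card_add]
    omega
  calc topSum (A + B) r = (S ∩ A).sum + (S - A).sum := by
        rw [← hSsum, ← Multiset.sum_add, hsplit]
    _ ≤ (S ∩ A).sum + T.sum := by
        rw [hTsum]
        gcongr
        exact (sum_le_topSum hSB le_rfl).trans (hB _)
    _ ≤ topSum (A + B') r := by
        rw [← Multiset.sum_add]
        exact sum_le_topSum (add_le_add Multiset.inter_le_right hT) hcard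

lemma topSum_map_range_of_antitone {g : ℕ → ℕ} (hg : Antitone g) (n r : ℕ) :
    topSum ((Multiset.range n).map g) r = ∑ j ∈ range (min r n), g j := by
  have hpair : ((List.range n).map g).Pairwise (· ≥ ·) :=
    List.pairwise_map.2 (List.pairwise_lt_range.imp fun hij => hg hij.le)
  rw [← Multiset.coe_range, Multiset.map_coe, topSum_coe_of_pairwise_ge hpair, ← List.map_take,
    List.take_range, ← Finset.sum_map_val, Finset.range_val, ← Multiset.coe_range,
    Multiset.map_coe, Multiset.sum_coe]

lemma topSum_usymbol_bottom (k : ℕ) {ζ : ℕ → ℕ} (hζ : Antitone ζ) (r : ℕ) :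
    topSum ((Multiset.range k).map (fun i => ζ (k - 1 - i) + 2 * i + 1)) r
      = ∑ j ∈ range (min r k), ζ j + ∑ j ∈ range (min r k), (2 * (k - 1 - j) + 1) := by
  have hreflect : (Multiset.range k).map (fun i => ζ (k - 1 - i) + 2 * i + 1)
      = (Multiset.range k).map (fun j => ζ j + (2 * (k - 1 - j) + 1)) := by
    rw [← Multiset.map_range_reflect]
    refine Multiset.map_congr rfl fun i hi => ?_
    have := Multiset.mem_range.1 hi
    rw [show k - 1 - (k - 1 - i) = i by omega]
    ring
  have hanti : Antitone fun j => ζ j + (2 * (k - 1 - j) + 1) :=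
    fun i j hij => add_le_add (hζ hij) (by omega)
  rw [hreflect, topSum_map_range_of_antitone hanti, Finset.sum_add_distrib]

theorem stmt18_general (k : ℕ) (ξ' ζ ζ' : ℕ → ℕ)
    (hζ_dec : ∀ i, ζ (i + 1) ≤ ζ i) (hζ'_dec : ∀ i, ζ' (i + 1) ≤ ζ' i)
    (hdom : ∀ j, ∑ i ∈ range j, ζ i ≤ ∑ i ∈ range j, ζ' i) :
    ∀ r, topSum (usymbolEntries k ξ' ζ) r ≤ topSum (usymbolEntries k ξ' ζ') r := by
  refine topSum_add_le_topSum_add _ fun s => ?_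
  rw [topSum_usymbol_bottom k (antitone_nat_of_succ_le hζ_dec),
    topSum_usymbol_bottom k (antitone_nat_of_succ_le hζ'_dec)]
  exact Nat.add_le_add_right (hdom _) _

/-- if ζ ≤ ζ' in dominance order, then the partial sums of the
decreasing rearrangements γ, γ' of the u-symbol entries of (ξ',ζ) and (ξ',ζ')
satisfy γ_1 + ⋯ + γ_r ≤ γ'_1 + ⋯ + γ'_r for every r. -/
theorem stmt18 (k : ℕ) (ξ' ζ ζ' : ℕ → ℕ)
    (hξ'_dec : ∀ i, ξ' (i + 1) ≤ ξ' i)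
    (hζ_dec : ∀ i, ζ (i + 1) ≤ ζ i) (hζ'_dec : ∀ i, ζ' (i + 1) ≤ ζ' i)
    (hξ'_supp : ∀ i, k + 1 ≤ i → ξ' i = 0)
    (hζ_supp : ∀ i, k ≤ i → ζ i = 0) (hζ'_supp : ∀ i, k ≤ i → ζ' i = 0)
    (hsize : ∑ i ∈ range k, ζ i = ∑ i ∈ range k, ζ' i)
    (hdom : ∀ j, ∑ i ∈ range j, ζ i ≤ ∑ i ∈ range j, ζ' i) :
    ∀ r, topSum (usymbolEntries k ξ' ζ) r ≤ topSum (usymbolEntries k ξ' ζ') r :=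
  stmt18_general k ξ' ζ ζ' hζ_dec hζ'_dec hdom
end
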